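/- Let (𝕋, 𝔽) be a hereditary torsion pair of finite type of left R-modules. Then 𝔽 is closed under pure quotients: if F ∈ 𝔽 and 0 → F′ → F → F″ → 0 is a pure exact sequence, then F″ ∈ 𝔽 (and also F′ ∈ 𝔽). -/

import Mathlib

universe u

open TensorProduct CategoryTheory DirectSum

noncomputable section

/-- The submodule of relations presenting the tensor product `Q ⊗_R M` as a quotient of
`Q ⊗_ℤ M`, for a right `R`-module `Q` and a left `R`-module `M`. -/
def tensorRelations (R : Type u) [Ring R] (Q : Type u) [AddCommGroup Q] [Module Rᵐᵒᵖ Q]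
    (M : Type u) [AddCommGroup M] [Module R M] : Submodule ℤ (TensorProduct ℤ Q M) :=
  Submodule.span ℤ
    {x | ∃ (q : Q) (r : R) (m : M), x = (MulOpposite.op r • q) ⊗ₜ[ℤ] m - q ⊗ₜ[ℤ] (r • m)}

/-- The map `Q ⊗_R M → Q ⊗_R N` induced by `f` is injective, where `Q ⊗_R -` is realized
as the quotient of `Q ⊗_ℤ -` by `tensorRelations`. -/
def StaysInjective (R : Type u) [Ring R] (Q : Type u) [AddCommGroup Q] [Module Rᵐᵒᵖ Q]
    {M N : Type u} [AddCommGroup M] [Module R M] [AddCommGroup N] [Module R N]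
    (f : M →ₗ[R] N) : Prop :=
  ∀ z : TensorProduct ℤ Q M,
    LinearMap.lTensor Q f.toAddMonoidHom.toIntLinearMap z ∈ tensorRelations R Q N →
      z ∈ tensorRelations R Q M

/-- `f` is a pure monomorphism of left `R`-modules: it is injective and stays injective
after tensoring with every right `R`-module. -/
def IsPureMono (R : Type u) [Ring R] {M N : Type u} [AddCommGroup M] [Module R M]
    [AddCommGroup N] [Module R N] (f : M →ₗ[R] N) : Prop :=
  Function.Injective f ∧
    ∀ (Q : Type u) [AddCommGroup Q] [Module Rᵐᵒᵖ Q], StaysInjective R Q f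

/-- `N` is a pure submodule of `M`. -/
def IsPureSubmodule (R : Type u) [Ring R] {M : Type u} [AddCommGroup M] [Module R M]
    (N : Submodule R M) : Prop :=
  IsPureMono R N.subtype

/-- `0 → M' → M → M'' → 0` is a pure exact sequence of left `R`-modules. -/
def IsPureExactSeq (R : Type u) [Ring R] {M' M M'' : Type u}
    [AddCommGroup M'] [Module R M'] [AddCommGroup M] [Module R M]
    [AddCommGroup M''] [Module R M'']
    (f : M' →ₗ[R] M) (g : M →ₗ[R] M'') : Prop :=
  Function.Surjective g ∧ Function.Exact f g ∧ IsPureMono R f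

/-- `(𝕋, 𝔽)` is a torsion pair of left `R`-modules: the two classes intersect only in zero
modules, `𝕋` is closed under quotients, `𝔽` is closed under submodules (both closures are
phrased so as to include closure under isomorphisms), and every module is an extension of a
module of `𝔽` by a module of `𝕋`. -/
structure IsTorsionPair (R : Type u) [Ring R] (𝕋 𝔽 : Set (ModuleCat.{u} R)) : Prop where
  inter_zero : ∀ M : ModuleCat.{u} R, M ∈ 𝕋 → M ∈ 𝔽 → Subsingleton M
  torsion_quot_closed : ∀ (M N : ModuleCat.{u} R) (g : M ⟶ N), Function.Surjective g →
    M ∈ 𝕋 → N ∈ 𝕋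
  free_sub_closed : ∀ (M N : ModuleCat.{u} R) (f : M ⟶ N), Function.Injective f →
    N ∈ 𝔽 → M ∈ 𝔽
  exists_seq : ∀ M : ModuleCat.{u} R, ∃ T₀ : Submodule R M,
    ModuleCat.of R T₀ ∈ 𝕋 ∧ ModuleCat.of R (↥M ⧸ T₀) ∈ 𝔽

/-- A torsion pair is hereditary if the torsion class is also closed under submodules. -/
def IsHereditary (R : Type u) [Ring R] (𝕋 : Set (ModuleCat.{u} R)) : Prop :=
  ∀ (M N : ModuleCat.{u} R) (f : M ⟶ N), Function.Injective f → N ∈ 𝕋 → M ∈ 𝕋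

/-- A torsion pair is of finite type: every left ideal `𝔞` with `R/𝔞` torsion contains a
finitely generated left ideal `𝔟` with `R/𝔟` torsion. -/
def IsOfFiniteType (R : Type u) [Ring R] (𝕋 : Set (ModuleCat.{u} R)) : Prop :=
  ∀ 𝔞 : Submodule R R, ModuleCat.of R (R ⧸ 𝔞) ∈ 𝕋 →
    ∃ 𝔟 : Submodule R R, 𝔟 ≤ 𝔞 ∧ 𝔟.FG ∧ ModuleCat.of R (R ⧸ 𝔟) ∈ 𝕋

/-! If `x` lies in a torsion submodule of `F''`, hereditarity and finite type give a finitely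
generated left ideal `𝔟 = (r₁, …, rₙ)` with `R/𝔟` torsion and `𝔟 x = 0`. The map `R/𝔟 → F''`,
`1 ↦ x`, lifts along the pure epimorphism `F → F''`: lifting it amounts to solving the system
`rᵢ X = aᵢ` in `F'` once it is solvable in `F`, and tensoring with the right module `Rⁿ/rR`,
whose tensor product with a left module `M` is the cokernel of `m ↦ (rᵢ m)ᵢ`, transfers
solvability along the pure monomorphism `F' → F`. The lift `y` generates a submodule of `F`
that is torsion (a quotient of `R/𝔟`) and torsion free, so `y = 0` and `x = 0`; thus the
torsion part of `F''` vanishes. -/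

section TensorRelations

variable {R : Type u} [Ring R] {Q : Type u} [AddCommGroup Q] [Module Rᵐᵒᵖ Q]
  {M : Type u} [AddCommGroup M] [Module R M]

theorem tmul_smul_sub_op_smul_tmul_mem_tensorRelations (q : Q) (r : R) (m : M) :
    q ⊗ₜ[ℤ] (r • m) - (MulOpposite.op r • q) ⊗ₜ[ℤ] m ∈ tensorRelations R Q M := by
  rw [← neg_sub]
  exact neg_mem (Submodule.subset_span ⟨q, r, m, rfl⟩)

theorem lift_eq_zero_of_mem_tensorRelations {G : Type*} [AddCommGroup G]
    (β : Q →ₗ[ℤ] M →ₗ[ℤ] G)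
    (hβ : ∀ (q : Q) (r : R) (m : M), β (MulOpposite.op r • q) m = β q (r • m))
    {z : Q ⊗[ℤ] M} (hz : z ∈ tensorRelations R Q M) : TensorProduct.lift β z = 0 := by
  induction hz using Submodule.span_induction with
  | mem _ h => obtain ⟨q, r, m, rfl⟩ := h; simp [hβ]
  | zero => simp
  | add _ _ _ _ h₁ h₂ => simp [h₁, h₂]
  | smul k _ _ h => simp [h]

end TensorRelations

section LinearSystem

variable {R : Type u} [Ring R] {n : ℕ} (r : Fin n → R)
  (M : Type u) [AddCommGroup M] [Module R M]

abbrev rowCoker : Type u := (Fin n → R) ⧸ Submodule.span Rᵐᵒᵖ {r}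

def smulColumn : M →ₗ[ℤ] Fin n → M :=
  LinearMap.pi fun i => DistribSMul.toLinearMap ℤ M (r i)

abbrev smulColumnCoker : Type u := (Fin n → M) ⧸ LinearMap.range (smulColumn r M)

-- Induces the isomorphism `rowCoker r ⊗_R M ≃ smulColumnCoker r M`.
def rowCokerPairing : rowCoker r →ₗ[ℤ] M →ₗ[ℤ] smulColumnCoker r M :=
  let pairing : (Fin n → R) →ₗ[ℤ] M →ₗ[ℤ] smulColumnCoker r M :=
    (LinearMap.mk₂ ℤ (fun (v : Fin n → R) (m : M) i => v i • m)
      (by intros; ext; simp [add_smul])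
      (by intros; ext; simp [mul_smul, Int.cast_smul_eq_zsmul])
      (by intros; ext; simp)
      (by intros; ext; simpa using smul_comm _ _ _)).compr₂ (Submodule.mkQ _)
  have hker : (Submodule.span Rᵐᵒᵖ {r}).restrictScalars ℤ ≤ LinearMap.ker pairing := by
    intro v hv
    obtain ⟨c, rfl⟩ := Submodule.mem_span_singleton.mp hv
    ext m
    simp only [pairing, LinearMap.compr₂_apply, LinearMap.mk₂_apply, Submodule.mkQ_apply,
      LinearMap.zero_apply]
    rw [Submodule.Quotient.mk_eq_zero]
    refine ⟨c.unop • m, ?_⟩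
    ext i
    simp [smulColumn, mul_smul]
  Submodule.liftQ _ pairing hker ∘ₗ
    (Submodule.Quotient.restrictScalarsEquiv ℤ (Submodule.span Rᵐᵒᵖ {r})).symm.toLinearMap

theorem mem_range_smulColumn_iff {a : Fin n → M} :
    a ∈ LinearMap.range (smulColumn r M) ↔ ∃ w : M, ∀ i, a i = r i • w := by
  simp [smulColumn, funext_iff, eq_comm]

@[simp]
theorem rowCokerPairing_mk (v : Fin n → R) (m : M) :
    rowCokerPairing r M (Submodule.Quotient.mk v) m = Submodule.Quotient.mk fun i => v i • m :=
  rfl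

theorem rowCokerPairing_op_smul (q : rowCoker r) (s : R) (m : M) :
    rowCokerPairing r M (MulOpposite.op s • q) m = rowCokerPairing r M q (s • m) := by
  obtain ⟨v, rfl⟩ := Submodule.Quotient.mk_surjective _ q
  rw [← Submodule.Quotient.mk_smul, rowCokerPairing_mk, rowCokerPairing_mk]
  simp [mul_smul]

end LinearSystem

theorem IsPureMono.exists_forall_smul_eq {R : Type u} [Ring R] {M' M : Type u}
    [AddCommGroup M'] [Module R M'] [AddCommGroup M] [Module R M] {f : M' →ₗ[R] M}
    (hf : IsPureMono R f) {n : ℕ} (r : Fin n → R) (a : Fin n → M') {y : M}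
    (hy : ∀ i, f (a i) = r i • y) : ∃ w : M', ∀ i, a i = r i • w := by
  classical
  let e : Fin n → rowCoker r := fun i => Submodule.Quotient.mk (Pi.single i 1)
  let z : rowCoker r ⊗[ℤ] M' := ∑ i, e i ⊗ₜ a i
  have hz : z ∈ tensorRelations R (rowCoker r) M' := by
    refine hf.2 _ z ?_
    -- Modulo the relations, `∑ eᵢ ⊗ rᵢ y ≡ (∑ eᵢ rᵢ) ⊗ y = [r] ⊗ y = 0`.
    have hsum : ∑ i, MulOpposite.op (r i) • e i = 0 := by
      calc ∑ i, MulOpposite.op (r i) • e i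
          = Submodule.mkQ _ (∑ i, MulOpposite.op (r i) • (Pi.single i 1 : Fin n → R)) := by
            simp [e]
        _ = Submodule.mkQ _ r := by
            congr 1
            ext j
            simp [Pi.single_apply]
        _ = 0 := (Submodule.Quotient.mk_eq_zero _).mpr (Submodule.mem_span_singleton_self r)
    have himage : LinearMap.lTensor _ f.toAddMonoidHom.toIntLinearMap z =
        ∑ i, (e i ⊗ₜ (r i • y) - (MulOpposite.op (r i) • e i) ⊗ₜ y) := by
      simp [z, hy, Finset.sum_sub_distrib, ← TensorProduct.sum_tmul, hsum]
    rw [himage]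
    exact Submodule.sum_mem _ fun i _ => tmul_smul_sub_op_smul_tmul_mem_tensorRelations _ _ _
  have hlift : TensorProduct.lift (rowCokerPairing r M') z = Submodule.Quotient.mk a := by
    simp only [z, e, map_sum, TensorProduct.lift.tmul, rowCokerPairing_mk]
    simp only [← Submodule.mkQ_apply, ← map_sum]
    congr 1
    ext j
    simp [Pi.single_apply]
  rw [← mem_range_smulColumn_iff, ← Submodule.Quotient.mk_eq_zero, ← hlift]
  exact lift_eq_zero_of_mem_tensorRelations _ (rowCokerPairing_op_smul r M') hz

open Submodule in
theorem IsPureExactSeq.exists_lift_le_torsionOf {R : Type u} [Ring R] {M' M M'' : Type u}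
    [AddCommGroup M'] [Module R M'] [AddCommGroup M] [Module R M]
    [AddCommGroup M''] [Module R M''] {f : M' →ₗ[R] M} {g : M →ₗ[R] M''}
    (hfg : IsPureExactSeq R f g) {𝔟 : Submodule R R} (h𝔟 : 𝔟.FG) {x : M''}
    (hx : 𝔟 ≤ Ideal.torsionOf R M'' x) : ∃ y : M, g y = x ∧ 𝔟 ≤ Ideal.torsionOf R M y := by
  obtain ⟨hg, hexact, hf⟩ := hfg
  obtain ⟨n, r, rfl⟩ := fg_iff_exists_fin_generating_family.mp h𝔟
  obtain ⟨y₀, rfl⟩ := hg x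
  have hr : ∀ i, g (r i • y₀) = 0 := fun i => by
    rw [map_smul, ← Ideal.mem_torsionOf_iff]
    exact hx (subset_span ⟨i, rfl⟩)
  choose a ha using fun i => (hexact _).mp (hr i)
  obtain ⟨w, hw⟩ := hf.exists_forall_smul_eq r a ha
  refine ⟨y₀ - f w, by rw [map_sub, hexact.apply_apply_eq_zero, sub_zero], ?_⟩
  rw [span_le]
  rintro _ ⟨i, rfl⟩
  rw [SetLike.mem_coe, Ideal.mem_torsionOf_iff, smul_sub, ← map_smul, ← hw, ha, sub_self]

namespace IsTorsionPair

variable {R : Type u} [Ring R] {𝕋 𝔽 : Set (ModuleCat.{u} R)} (htp : IsTorsionPair R 𝕋 𝔽)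
include htp

theorem mem_free_of_forall_torsion_eq_bot {M : ModuleCat.{u} R}
    (hM : ∀ N : Submodule R M, ModuleCat.of R N ∈ 𝕋 → N = ⊥) : M ∈ 𝔽 := by
  obtain ⟨T, hT, hquot⟩ := htp.exists_seq M
  refine htp.free_sub_closed M _ (ModuleCat.ofHom T.mkQ) ?_ hquot
  change Function.Injective T.mkQ
  rw [← LinearMap.ker_eq_bot, Submodule.ker_mkQ, hM T hT]

theorem quotient_torsionOf_mem_torsion (hher : IsHereditary R 𝕋) {M : ModuleCat.{u} R}
    {N : Submodule R M} (hN : ModuleCat.of R N ∈ 𝕋) {x : M} (hx : x ∈ N) :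
    ModuleCat.of R (R ⧸ Ideal.torsionOf R M x) ∈ 𝕋 := by
  have hle : R ∙ x ≤ N := (Submodule.span_singleton_le_iff_mem x N).mpr hx
  have hspan : ModuleCat.of R (R ∙ x) ∈ 𝕋 :=
    hher _ _ (ModuleCat.ofHom (Submodule.inclusion hle)) (Submodule.inclusion_injective hle) hN
  exact htp.torsion_quot_closed _ _
    (ModuleCat.ofHom (Ideal.quotTorsionOfEquivSpanSingleton R M x).symm.toLinearMap)
    (Ideal.quotTorsionOfEquivSpanSingleton R M x).symm.surjective hspan

theorem eq_zero_of_le_torsionOf {M : ModuleCat.{u} R} (hM : M ∈ 𝔽) {𝔟 : Submodule R R}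
    (h𝔟 : ModuleCat.of R (R ⧸ 𝔟) ∈ 𝕋) {y : M} (hy : 𝔟 ≤ Ideal.torsionOf R M y) :
    y = 0 := by
  let π : (R ⧸ 𝔟) →ₗ[R] R ∙ y :=
    (Ideal.quotTorsionOfEquivSpanSingleton R M y).toLinearMap ∘ₗ Submodule.factor hy
  have hπ : Function.Surjective π :=
    (Ideal.quotTorsionOfEquivSpanSingleton R M y).surjective.comp (Submodule.factor_surjective hy)
  have hT : ModuleCat.of R (R ∙ y) ∈ 𝕋 := htp.torsion_quot_closed _ _ (ModuleCat.ofHom π) hπ h𝔟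
  have hF : ModuleCat.of R (R ∙ y) ∈ 𝔽 :=
    htp.free_sub_closed _ _ (ModuleCat.ofHom (R ∙ y).subtype) (Submodule.injective_subtype _) hM
  have hsub := htp.inter_zero _ hT hF
  simpa using congrArg Subtype.val
    (Subsingleton.elim (⟨y, Submodule.mem_span_singleton_self y⟩ : R ∙ y) 0)

end IsTorsionPair

/-- For a hereditary torsion pair `(𝕋, 𝔽)` of finite type, the torsion free class `𝔽` is
closed under pure quotients (and pure submodules): if `F ∈ 𝔽` and
`0 → F' → F → F'' → 0` is pure exact, then `F'' ∈ 𝔽` and `F' ∈ 𝔽`. -/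
theorem stmt18 (R : Type u) [Ring R] (𝕋 𝔽 : Set (ModuleCat.{u} R))
    (htp : IsTorsionPair R 𝕋 𝔽) (hher : IsHereditary R 𝕋) (hft : IsOfFiniteType R 𝕋)
    (F' F F'' : ModuleCat.{u} R) (f : F' ⟶ F) (g : F ⟶ F'')
    (hpure : IsPureExactSeq R (f.hom : F' →ₗ[R] F) (g.hom : F →ₗ[R] F''))
    (hF : F ∈ 𝔽) :
    F'' ∈ 𝔽 ∧ F' ∈ 𝔽 := by
  refine ⟨htp.mem_free_of_forall_torsion_eq_bot fun N hN => ?_,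
    htp.free_sub_closed _ _ f hpure.2.2.1 hF⟩
  refine (Submodule.eq_bot_iff N).mpr fun x hx => ?_
  obtain ⟨𝔟, h𝔟x, h𝔟fg, h𝔟⟩ := hft _ (htp.quotient_torsionOf_mem_torsion hher hN hx)
  obtain ⟨y, rfl, hy⟩ := hpure.exists_lift_le_torsionOf h𝔟fg h𝔟x
  rw [htp.eq_zero_of_le_torsionOf hF h𝔟 hy, map_zero]

end
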